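/- Decryption correctness of the RSA-like scheme: let p, q be distinct odd primes, N = pq, and D ∈ ℤ/N with D a quadratic non-residue modulo both p and q. For every point (x,y) ∈ ℤ/N × ℤ/N with x² − Dy² = 1 and every positive integer r with r ≡ 1 (mod lcm(p+1, q+1)), the r-th power of (x,y) with respect to the product ⊙ equals (x,y): (x,y)^{⊙r} = (x,y). In particular, if gcd(e, lcm(p+1,q+1)) = 1 and d·e ≡ 1 (mod lcm(p+1,q+1)), then ((x,y)^{⊙e})^{⊙d} = (x,y). -/
import Mathlib


/-- The Pell-conic product `(x₁,y₁) ⊙ (x₂,y₂) = (x₁x₂ + D y₁y₂, y₁x₂ + x₁y₂)`. -/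
def pellMul {R : Type*} [CommRing R] (D : R) (P Q : R × R) : R × R :=
  (P.1 * Q.1 + D * P.2 * Q.2, P.2 * Q.1 + P.1 * Q.2)

/-- `n`-fold `⊙`-power of a point, with `P^{⊙0} = (1,0)`. -/
def pellPow {R : Type*} [CommRing R] (D : R) (P : R × R) : ℕ → R × R
  | 0 => (1, 0)
  | n + 1 => pellMul D P (pellPow D P n)

section PellLemmas

variable {R S : Type*} [CommRing R] [CommRing S]

lemma pellMul_comm (D : R) (P Q : R × R) : pellMul D P Q = pellMul D Q P := by
  simp only [pellMul, Prod.mk.injEq]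
  constructor <;> ring

lemma pellMul_assoc (D : R) (P Q T : R × R) :
    pellMul D (pellMul D P Q) T = pellMul D P (pellMul D Q T) := by
  simp only [pellMul, Prod.mk.injEq]
  constructor <;> ring

lemma pellMul_one (D : R) (P : R × R) : pellMul D P (1, 0) = P := by
  simp [pellMul]

lemma pellMul_one' (D : R) (P : R × R) : pellMul D (1, 0) P = P := by
  simp [pellMul]

lemma pellPow_succ (D : R) (P : R × R) (n : ℕ) :
    pellPow D P (n + 1) = pellMul D P (pellPow D P n) := rfl

lemma pellPow_one (D : R) (P : R × R) : pellPow D P 1 = P := by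
  show pellMul D P (1, 0) = P
  exact pellMul_one D P

lemma pellPow_add (D : R) (P : R × R) (m n : ℕ) :
    pellPow D P (m + n) = pellMul D (pellPow D P m) (pellPow D P n) := by
  induction m with
  | zero => simp [pellPow, pellMul_one']
  | succ m ih =>
    have : m + 1 + n = (m + n) + 1 := by omega
    rw [this, pellPow_succ, ih, pellPow_succ, pellMul_assoc]

lemma pellPow_mul (D : R) (P : R × R) (m n : ℕ) :
    pellPow D P (m * n) = pellPow D (pellPow D P m) n := by
  induction n with
  | zero => simp [pellPow]
  | succ n ih =>
    rw [Nat.mul_succ, pellPow_add, ih, pellPow_succ, pellMul_comm]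

lemma pellPow_one_zero (D : R) (n : ℕ) : pellPow D ((1 : R), (0 : R)) n = (1, 0) := by
  induction n with
  | zero => rfl
  | succ n ih => rw [pellPow_succ, ih, pellMul_one]

lemma pellMul_map (g : R →+* S) (D : R) (P Q : R × R) :
    Prod.map g g (pellMul D P Q) = pellMul (g D) (Prod.map g g P) (Prod.map g g Q) := by
  simp [pellMul, Prod.map, map_add, map_mul]

lemma pellPow_map (g : R →+* S) (D : R) (P : R × R) (n : ℕ) :
    Prod.map g g (pellPow D P n) = pellPow (g D) (Prod.map g g P) n := by
  induction n with
  | zero => simp [pellPow]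
  | succ n ih => rw [pellPow_succ, pellMul_map, ih, pellPow_succ]

end PellLemmas

open Polynomial

/-- The embedding of pairs into `AdjoinRoot f`. -/
noncomputable def pellEmb {K : Type*} [CommRing K] (f : Polynomial K) (P : K × K) :
    AdjoinRoot f :=
  AdjoinRoot.of f P.1 + AdjoinRoot.of f P.2 * AdjoinRoot.root f

lemma pellEmb_mul {K : Type*} [CommRing K] {f : Polynomial K} {D : K}
    (hroot : AdjoinRoot.root f ^ 2 = AdjoinRoot.of f D) (P Q : K × K) :
    pellEmb f (pellMul D P Q) = pellEmb f P * pellEmb f Q := by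
  simp only [pellEmb, pellMul, map_add, map_mul]
  linear_combination (-(AdjoinRoot.of f P.2 * AdjoinRoot.of f Q.2)) * hroot

lemma pellEmb_pow {K : Type*} [CommRing K] {f : Polynomial K} {D : K}
    (hroot : AdjoinRoot.root f ^ 2 = AdjoinRoot.of f D) (P : K × K) (n : ℕ) :
    pellEmb f (pellPow D P n) = pellEmb f P ^ n := by
  induction n with
  | zero => simp [pellPow, pellEmb]
  | succ n ih => rw [pellPow_succ, pellEmb_mul hroot, ih, pow_succ, mul_comm]

/-- The key local statement: over `ZMod s` with `D` a non-residue, every point on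
the conic has order dividing `s + 1`. -/
lemma pell_pow_card_add_one (s : ℕ) [Fact s.Prime] (hsodd : Odd s)
    (D : ZMod s) (hD : ¬ ∃ t : ZMod s, t ^ 2 = D) (x y : ZMod s)
    (hxy : x ^ 2 - D * y ^ 2 = 1) :
    pellPow D (x, y) (s + 1) = (1, 0) := by
  have hD0 : D ≠ 0 := fun h => hD ⟨0, by simp [h]⟩
  have hDns : ¬ IsSquare D := fun ⟨t, ht⟩ => hD ⟨t, by rw [sq]; exact ht.symm⟩
  have hEuler : D ^ (s / 2) = -1 := by
    rcases ZMod.pow_div_two_eq_neg_one_or_one s hD0 with h | h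
    · exact absurd ((ZMod.euler_criterion s hD0).mpr h) hDns
    · exact h
  set f : Polynomial (ZMod s) := X ^ 2 - C D with hf
  have hfmonic : f.Monic := monic_X_pow_sub_C D two_ne_zero
  have hfdeg : f.natDegree = 2 := natDegree_X_pow_sub_C
  haveI : Nontrivial (AdjoinRoot f) := by
    refine AdjoinRoot.nontrivial f ?_
    rw [degree_eq_natDegree hfmonic.ne_zero, hfdeg]
    exact by norm_num
  haveI : CharP (AdjoinRoot f) s :=
    charP_of_injective_algebraMap (algebraMap (ZMod s) (AdjoinRoot f)).injective s
  have hroot : AdjoinRoot.root f ^ 2 = AdjoinRoot.of f D := by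
    have h0 : AdjoinRoot.mk f f = 0 := AdjoinRoot.mk_self
    rw [hf] at h0
    have : (AdjoinRoot.root f) ^ 2 - AdjoinRoot.of f D = 0 := by
      simpa [map_sub, map_pow] using h0
    exact sub_eq_zero.mp this
  -- Frobenius computation
  have hrootp : AdjoinRoot.root f ^ s = - AdjoinRoot.root f := by
    have hs2 : s = 2 * (s / 2) + 1 := by
      rcases hsodd with ⟨k, hk⟩; omega
    calc AdjoinRoot.root f ^ s = (AdjoinRoot.root f ^ 2) ^ (s / 2) * AdjoinRoot.root f := by
          rw [← pow_mul, ← pow_succ]; rw [← hs2]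
      _ = AdjoinRoot.of f (D ^ (s / 2)) * AdjoinRoot.root f := by rw [hroot, map_pow]
      _ = - AdjoinRoot.root f := by rw [hEuler]; simp
  have hPp : pellEmb f (x, y) ^ s = pellEmb f (x, -y) := by
    have h1 : (AdjoinRoot.of f x + AdjoinRoot.of f y * AdjoinRoot.root f) ^ s
        = AdjoinRoot.of f x ^ s + (AdjoinRoot.of f y * AdjoinRoot.root f) ^ s :=
      add_pow_char _ _ _
    have h2 : AdjoinRoot.of f x ^ s = AdjoinRoot.of f x := by
      rw [← map_pow, ZMod.pow_card]
    have h3 : AdjoinRoot.of f y ^ s = AdjoinRoot.of f y := by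
      rw [← map_pow, ZMod.pow_card]
    show (AdjoinRoot.of f x + AdjoinRoot.of f y * AdjoinRoot.root f) ^ s
        = AdjoinRoot.of f x + AdjoinRoot.of f (-y) * AdjoinRoot.root f
    rw [h1, mul_pow, h2, h3, hrootp, map_neg]
    ring
  have hval : pellEmb f (pellPow D (x, y) (s + 1)) = pellEmb f (1, 0) := by
    rw [pellEmb_pow hroot, pow_succ, hPp, ← pellEmb_mul hroot]
    have : pellMul D (x, -y) (x, y) = ((1 : ZMod s), (0 : ZMod s)) := by
      simp only [pellMul, Prod.mk.injEq]
      constructor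
      · linear_combination hxy
      · ring
    rw [this]
  -- injectivity of the embedding
  have hinj : ∀ P Q : ZMod s × ZMod s, pellEmb f P = pellEmb f Q → P = Q := by
    intro P Q h
    have hz : AdjoinRoot.of f (P.1 - Q.1) + AdjoinRoot.of f (P.2 - Q.2) * AdjoinRoot.root f
        = 0 := by
      simp only [pellEmb] at h
      simp only [map_sub]
      linear_combination h
    have hmk : AdjoinRoot.mk f (C (P.1 - Q.1) + C (P.2 - Q.2) * X) = 0 := by
      simpa [map_add, map_mul] using hz
    rw [AdjoinRoot.mk_eq_zero] at hmk
    have hg0 : (C (P.1 - Q.1) + C (P.2 - Q.2) * X : Polynomial (ZMod s)) = 0 := by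
      by_contra hg
      have h1 : (C (P.1 - Q.1) + C (P.2 - Q.2) * X : Polynomial (ZMod s)).natDegree ≤ 1 := by
        compute_degree
      have h2 := Polynomial.natDegree_le_of_dvd hmk hg
      omega
    have e1 : P.1 - Q.1 = 0 := by
      have := congrArg (fun g => Polynomial.coeff g 0) hg0
      simpa using this
    have e2 : P.2 - Q.2 = 0 := by
      have := congrArg (fun g => Polynomial.coeff g 1) hg0
      simpa using this
    exact Prod.ext (by linear_combination e1) (by linear_combination e2)
  exact hinj _ _ hval

lemma pell_local (s : ℕ) [Fact s.Prime] (hsodd : Odd s) (Ds : ZMod s)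
    (hDs : ¬ ∃ t : ZMod s, t ^ 2 = Ds) (x y : ZMod s) (hxy : x ^ 2 - Ds * y ^ 2 = 1)
    (r : ℕ) (hr : 0 < r) (hdvd : (s + 1) ∣ (r - 1)) :
    pellPow Ds (x, y) r = (x, y) := by
  obtain ⟨m, hm⟩ := hdvd
  have hrm : r = 1 + (s + 1) * m := by omega
  rw [hrm, pellPow_add, pellPow_one, pellPow_mul,
    pell_pow_card_add_one s hsodd Ds hDs x y hxy, pellPow_one_zero, pellMul_one]

/-- decryption correctness of the RSA-like scheme: for distinct
odd primes `p, q`, `N = pq`, `D ∈ ℤ/N` a quadratic non-residue modulo both `p`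
and `q`, every point `(x,y)` with `x² − Dy² = 1` and every positive `r` with
`r ≡ 1 (mod lcm(p+1, q+1))` satisfy `(x,y)^{⊙r} = (x,y)`.  In particular, if
`gcd(e, lcm(p+1,q+1)) = 1` and `d·e ≡ 1 (mod lcm(p+1,q+1))`, then
`((x,y)^{⊙e})^{⊙d} = (x,y)`. -/
theorem pell_decryption_correct (p q : ℕ) (hp : p.Prime) (hq : q.Prime)
    (hpodd : Odd p) (hqodd : Odd q) (hpq : p ≠ q)
    (D : ZMod (p * q))
    (hDp : ¬ ∃ t : ZMod p, t ^ 2 = ZMod.castHom (dvd_mul_right p q) (ZMod p) D)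
    (hDq : ¬ ∃ t : ZMod q, t ^ 2 = ZMod.castHom (dvd_mul_left q p) (ZMod q) D) :
    (∀ x y : ZMod (p * q), x ^ 2 - D * y ^ 2 = 1 →
      ∀ r : ℕ, 0 < r → r % Nat.lcm (p + 1) (q + 1) = 1 →
        pellPow D (x, y) r = (x, y)) ∧
    (∀ x y : ZMod (p * q), x ^ 2 - D * y ^ 2 = 1 →
      ∀ e d : ℕ, Nat.gcd e (Nat.lcm (p + 1) (q + 1)) = 1 →
        (d * e) % Nat.lcm (p + 1) (q + 1) = 1 →
        pellPow D (pellPow D (x, y) e) d = (x, y)) := by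
  haveI : Fact p.Prime := ⟨hp⟩
  haveI : Fact q.Prime := ⟨hq⟩
  have hcop : Nat.Coprime p q := (Nat.coprime_primes hp hq).mpr hpq
  set L := Nat.lcm (p + 1) (q + 1) with hL
  set gp := ZMod.castHom (dvd_mul_right p q) (ZMod p) with hgp
  set gq := ZMod.castHom (dvd_mul_left q p) (ZMod q) with hgq
  haveI : NeZero (p * q) := ⟨Nat.mul_ne_zero hp.pos.ne' hq.pos.ne'⟩
  have hinjN : ∀ a b : ZMod (p * q), gp a = gp b → gq a = gq b → a = b := by
    intro a b h1 h2
    have hc1 : gp (a - b) = 0 := by rw [map_sub, h1, sub_self]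
    have hc2 : gq (a - b) = 0 := by rw [map_sub, h2, sub_self]
    set c := a - b with hcdef
    have hval : c = ((c.val : ℕ) : ZMod (p * q)) := (ZMod.natCast_zmod_val c).symm
    have hp' : ((c.val : ℕ) : ZMod p) = 0 := by
      rw [← map_natCast gp, ← hval]; exact hc1
    have hq' : ((c.val : ℕ) : ZMod q) = 0 := by
      rw [← map_natCast gq, ← hval]; exact hc2
    rw [ZMod.natCast_eq_zero_iff] at hp' hq'
    have : (p * q) ∣ c.val := Nat.Coprime.mul_dvd_of_dvd_of_dvd hcop hp' hq'
    have hc0 : c = 0 := by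
      rw [hval, ZMod.natCast_eq_zero_iff]; exact this
    have := sub_eq_zero.mp hc0
    exact this
  have main : ∀ x y : ZMod (p * q), x ^ 2 - D * y ^ 2 = 1 →
      ∀ r : ℕ, 0 < r → r % L = 1 → pellPow D (x, y) r = (x, y) := by
    intro x y hxy r hr hrmod
    have hLr : L ∣ (r - 1) := by
      have := Nat.div_add_mod r L
      exact ⟨r / L, by omega⟩
    have hxyp : (gp x) ^ 2 - (gp D) * (gp y) ^ 2 = 1 := by
      have := congrArg gp hxy
      simpa [map_sub, map_mul, map_pow, map_one] using this
    have hxyq : (gq x) ^ 2 - (gq D) * (gq y) ^ 2 = 1 := by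
      have := congrArg gq hxy
      simpa [map_sub, map_mul, map_pow, map_one] using this
    have hlocp : pellPow (gp D) (gp x, gp y) r = (gp x, gp y) :=
      pell_local p hpodd (gp D) hDp (gp x) (gp y) hxyp r hr
        (dvd_trans (Nat.dvd_lcm_left _ _) hLr)
    have hlocq : pellPow (gq D) (gq x, gq y) r = (gq x, gq y) :=
      pell_local q hqodd (gq D) hDq (gq x) (gq y) hxyq r hr
        (dvd_trans (Nat.dvd_lcm_right _ _) hLr)
    have hmp : Prod.map gp gp (pellPow D (x, y) r) = Prod.map gp gp (x, y) := by
      rw [pellPow_map]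
      exact hlocp
    have hmq : Prod.map gq gq (pellPow D (x, y) r) = Prod.map gq gq (x, y) := by
      rw [pellPow_map]
      exact hlocq
    have h1p : gp (pellPow D (x, y) r).1 = gp x := congrArg Prod.fst hmp
    have h2p : gp (pellPow D (x, y) r).2 = gp y := congrArg Prod.snd hmp
    have h1q : gq (pellPow D (x, y) r).1 = gq x := congrArg Prod.fst hmq
    have h2q : gq (pellPow D (x, y) r).2 = gq y := congrArg Prod.snd hmq
    exact Prod.ext (hinjN _ _ h1p h1q) (hinjN _ _ h2p h2q)
  refine ⟨main, ?_⟩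
  intro x y hxy e d hgcd hde
  have hpos : 0 < d * e := by
    rcases Nat.eq_zero_or_pos (d * e) with h | h
    · rw [h, Nat.zero_mod] at hde; omega
    · exact h
  rw [← pellPow_mul, show e * d = d * e from Nat.mul_comm e d]
  exact main x y hxy (d * e) hpos hde
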